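/- (Spectral density of the Type-2 Gumbel mixture.) For every b > 0 and every θ ∈ (0, π/2), setting u_b(θ) = √( (log tan θ)²/4 + 2b ), one has ∫_0^∞ [ 1/(2λ sin θ cos²θ) · φ(λ + log(tan θ)/(2λ)) ] · 2b λ^{−3} e^{−b/λ²} dλ = [ e^{−u_b(θ)} / (4 (sin θ cos θ)^{3/2}) ] · ( 1 − (log tan θ)²/(4 u_b(θ)²) ) · ( 1 + 1/u_b(θ) ). -/

import Mathlib

/-!
Write `m = log tan θ` and `u = √(m²/4 + 2b)`. Completing the square,
`φ(l + m/(2l)) e^{-b/l²} = e^{-m/2} k_u(l) / √(2π)` with `k_u(l) = exp(-(l² + u²/l²)/2)`, so the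
integral is a constant multiple of `∫₀^∞ k_u(l) l⁻⁴ dl`. Since `φ(l ∓ u/l) = e^{±u} k_u(l) / √(2π)`
and `(l ∓ u/l)' = 1 ± u/l²`, this integrand has the elementary antiderivative
`k_u(l)/(u² l) + √(2π)/(2u²) ((1 + 1/u) e^{-u} Φ(l - u/l) + (1 - 1/u) e^{u} Φ(l + u/l))`,
which tends to `√(2π)/(2u²) (1 - 1/u) e^{u}` at `0⁺` and to its value with `Φ ≡ 1` at `∞`.
The remaining factor is `(sin θ cos θ)^{3/2} = sin θ cos² θ e^{m/2}`.
-/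

open MeasureTheory Filter Real Set

/-- Standard normal density. -/
noncomputable def stdPdf (t : ℝ) : ℝ := (Real.sqrt (2 * Real.pi))⁻¹ * Real.exp (-(t ^ 2) / 2)

/-- Standard normal CDF. -/
noncomputable def stdCdf (x : ℝ) : ℝ := ∫ t in Set.Iic x, stdPdf t

open Topology ProbabilityTheory

theorem integral_Ioi_of_hasDerivAt_of_nonneg_of_tendsto_nhdsGT {f f' : ℝ → ℝ} {a c d : ℝ}
    (hderiv : ∀ x ∈ Ioi a, HasDerivAt f (f' x) x) (hf' : ∀ x ∈ Ioi a, 0 ≤ f' x)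
    (hleft : Tendsto f (𝓝[>] a) (𝓝 c)) (htop : Tendsto f atTop (𝓝 d)) :
    ∫ x in Ioi a, f' x = d - c := by
  classical
  -- Redefining `f` at `a` as its right limit makes it continuous on `[a, ∞)`.
  have hf_eq : ∀ x ∈ Ioi a, Function.update f a c =ᶠ[𝓝 x] f := fun x hx =>
    (eventually_ne_nhds (ne_of_gt hx)).mono fun y hy => Function.update_of_ne hy _ _
  simpa using integral_Ioi_of_hasDerivAt_of_nonneg
    (continuousWithinAt_update_same.2 (by rwa [Ici_sdiff_left]))
    (fun x hx => (hderiv x hx).congr_of_eventuallyEq (hf_eq x hx)) hf'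
    (htop.congr' ((eventually_gt_atTop a).mono fun y hy =>
      (Function.update_of_ne hy.ne' _ _).symm))

theorem stdPdf_eq_gaussianPDFReal : stdPdf = gaussianPDFReal 0 1 := by
  ext t
  simp [stdPdf, gaussianPDFReal]

theorem stdCdf_eq_cdf_gaussianReal : stdCdf = cdf (gaussianReal 0 1) := by
  ext x
  rw [cdf_eq_real, measureReal_def, gaussianReal_apply_eq_integral _ one_ne_zero,
    ENNReal.toReal_ofReal (integral_nonneg fun t => gaussianPDFReal_nonneg 0 1 t), stdCdf,
    stdPdf_eq_gaussianPDFReal]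

theorem hasDerivAt_stdCdf (x : ℝ) : HasDerivAt stdCdf (stdPdf x) x := by
  have hint : Integrable stdPdf := stdPdf_eq_gaussianPDFReal ▸ integrable_gaussianPDFReal 0 1
  have hcont : Continuous stdPdf := by unfold stdPdf; fun_prop
  have hsplit : ∀ y, stdCdf y = stdCdf 0 + ∫ t in (0 : ℝ)..y, stdPdf t := fun y => by
    rw [← intervalIntegral.integral_Iic_sub_Iic hint.integrableOn hint.integrableOn, stdCdf, stdCdf]
    ring
  rw [funext hsplit]
  exact (intervalIntegral.integral_hasDerivAt_right hint.intervalIntegrable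
    (hcont.stronglyMeasurableAtFilter _ _) hcont.continuousAt).const_add _

theorem tendsto_stdCdf_atTop : Tendsto stdCdf atTop (𝓝 1) :=
  stdCdf_eq_cdf_gaussianReal ▸ tendsto_cdf_atTop _

theorem tendsto_stdCdf_atBot : Tendsto stdCdf atBot (𝓝 0) :=
  stdCdf_eq_cdf_gaussianReal ▸ tendsto_cdf_atBot _

noncomputable def mixKernel (a l : ℝ) : ℝ := exp (-(l ^ 2 + a ^ 2 / l ^ 2) / 2)

theorem mixKernel_neg (a l : ℝ) : mixKernel (-a) l = mixKernel a l := by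
  simp [mixKernel]

theorem stdPdf_add_div (a : ℝ) {l : ℝ} (hl : l ≠ 0) :
    stdPdf (l + a / l) = (√(2 * π))⁻¹ * exp (-a) * mixKernel a l := by
  rw [stdPdf, mixKernel, mul_assoc, ← exp_add]
  congr 2
  field_simp
  ring

theorem mixKernel_le_one (a l : ℝ) : mixKernel a l ≤ 1 := by
  rw [mixKernel, exp_le_one_iff]
  have : 0 ≤ a ^ 2 / l ^ 2 := by positivity
  nlinarith [sq_nonneg l]

theorem mixKernel_le_two_mul_sq_div_sq (a : ℝ) {l : ℝ} (hl : 0 < l) (ha : a ≠ 0) :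
    mixKernel a l ≤ 2 * l ^ 2 / a ^ 2 := by
  calc mixKernel a l ≤ exp (-(a ^ 2 / (2 * l ^ 2))) := by
        rw [mixKernel]; gcongr; field_simp; nlinarith [sq_nonneg l]
    _ = (exp (a ^ 2 / (2 * l ^ 2)))⁻¹ := exp_neg _
    _ ≤ (a ^ 2 / (2 * l ^ 2))⁻¹ := by gcongr; linarith [add_one_le_exp (a ^ 2 / (2 * l ^ 2))]
    _ = 2 * l ^ 2 / a ^ 2 := by rw [inv_div]

theorem hasDerivAt_mixKernel (a : ℝ) {l : ℝ} (hl : l ≠ 0) :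
    HasDerivAt (mixKernel a) (mixKernel a l * (a ^ 2 / l ^ 3 - l)) l := by
  have h := (((hasDerivAt_pow 2 l).fun_add
    (((hasDerivAt_pow 2 l).fun_inv (pow_ne_zero 2 hl)).const_mul (a ^ 2))).fun_neg).div_const 2
  simp only [← div_eq_mul_inv] at h
  exact (h.congr_deriv (by field_simp; ring)).exp

theorem hasDerivAt_stdCdf_add_div (a : ℝ) {l : ℝ} (hl : l ≠ 0) :
    HasDerivAt (fun x => stdCdf (x + a / x))
      ((√(2 * π))⁻¹ * exp (-a) * mixKernel a l * (1 - a / l ^ 2)) l := by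
  have h := (hasDerivAt_id' l).fun_add ((hasDerivAt_inv hl).const_mul a)
  simp only [← div_eq_mul_inv] at h
  rw [← stdPdf_add_div a hl]
  exact (hasDerivAt_stdCdf _).comp l (h.congr_deriv (by ring))

noncomputable def mixAntideriv (u l : ℝ) : ℝ :=
  mixKernel u l / (u ^ 2 * l) + √(2 * π) / (2 * u ^ 2) *
    ((1 + 1 / u) * exp (-u) * stdCdf (l - u / l) + (1 - 1 / u) * exp u * stdCdf (l + u / l))

theorem hasDerivAt_mixAntideriv {u : ℝ} (hu : u ≠ 0) {l : ℝ} (hl : l ≠ 0) :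
    HasDerivAt (mixAntideriv u) (mixKernel u l / l ^ 4) l := by
  have hminus := hasDerivAt_stdCdf_add_div (-u) hl
  simp only [neg_div, ← sub_eq_add_neg, neg_neg, mixKernel_neg] at hminus
  have hkernel := (hasDerivAt_mixKernel u hl).fun_div
    ((hasDerivAt_id' l).const_mul (u ^ 2)) (by positivity)
  have h := hkernel.fun_add
    (((hminus.const_mul ((1 + 1 / u) * exp (-u))).fun_add
      ((hasDerivAt_stdCdf_add_div u hl).const_mul ((1 - 1 / u) * exp u))).const_mul
        (√(2 * π) / (2 * u ^ 2)))
  refine h.congr_deriv ?_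
  rw [exp_neg]
  field_simp
  ring

theorem tendsto_mixKernel_div_nhdsGT_zero {u : ℝ} (hu : u ≠ 0) :
    Tendsto (fun l => mixKernel u l / (u ^ 2 * l)) (𝓝[>] 0) (𝓝 0) := by
  have hbound : Tendsto (fun l : ℝ => 2 / u ^ 4 * l) (𝓝[>] 0) (𝓝 0) := by
    simpa using (tendsto_id.const_mul (2 / u ^ 4)).mono_left (nhdsWithin_le_nhds (a := (0 : ℝ)))
  refine squeeze_zero' ?_ ?_ hbound <;>
    filter_upwards [self_mem_nhdsWithin] with l (hl : 0 < l)
  · exact div_nonneg (exp_pos _).le (by positivity)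
  · calc mixKernel u l / (u ^ 2 * l) ≤ 2 * l ^ 2 / u ^ 2 / (u ^ 2 * l) := by
          gcongr; exact mixKernel_le_two_mul_sq_div_sq u hl hu
      _ = 2 / u ^ 4 * l := by field_simp

theorem tendsto_mixKernel_div_atTop (u : ℝ) :
    Tendsto (fun l => mixKernel u l / (u ^ 2 * l)) atTop (𝓝 0) := by
  have hbound : Tendsto (fun l : ℝ => (u ^ 2)⁻¹ * l⁻¹) atTop (𝓝 0) := by
    simpa using tendsto_inv_atTop_zero.const_mul (u ^ 2)⁻¹
  refine squeeze_zero' ?_ ?_ hbound <;>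
    filter_upwards [eventually_gt_atTop 0] with l (hl : 0 < l)
  · exact div_nonneg (exp_pos _).le (by positivity)
  · calc mixKernel u l / (u ^ 2 * l) ≤ 1 / (u ^ 2 * l) := by
          gcongr; exact mixKernel_le_one u l
      _ = (u ^ 2)⁻¹ * l⁻¹ := by rw [one_div, mul_inv]

theorem tendsto_mixAntideriv_nhdsGT_zero {u : ℝ} (hu : 0 < u) :
    Tendsto (mixAntideriv u) (𝓝[>] 0) (𝓝 (√(2 * π) / (2 * u ^ 2) * ((1 - 1 / u) * exp u))) := by
  have hid : Tendsto (fun l : ℝ => l) (𝓝[>] 0) (𝓝 0) :=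
    tendsto_nhdsWithin_of_tendsto_nhds tendsto_id
  have hinv : Tendsto (fun l : ℝ => u / l) (𝓝[>] 0) atTop := by
    simpa [div_eq_mul_inv] using tendsto_inv_nhdsGT_zero.const_mul_atTop hu
  have hminus := tendsto_stdCdf_atBot.comp (hid.add_atBot (tendsto_neg_atTop_atBot.comp hinv))
  have hplus := tendsto_stdCdf_atTop.comp (hid.add_atTop hinv)
  have h := (tendsto_mixKernel_div_nhdsGT_zero hu.ne').add
    (((hminus.const_mul ((1 + 1 / u) * exp (-u))).add
      (hplus.const_mul ((1 - 1 / u) * exp u))).const_mul (√(2 * π) / (2 * u ^ 2)))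
  convert h using 1
  · ext l; simp [mixAntideriv, sub_eq_add_neg]
  · simp

theorem tendsto_mixAntideriv_atTop (u : ℝ) :
    Tendsto (mixAntideriv u) atTop
      (𝓝 (√(2 * π) / (2 * u ^ 2) * ((1 + 1 / u) * exp (-u) + (1 - 1 / u) * exp u))) := by
  have hinv : Tendsto (fun l : ℝ => u / l) atTop (𝓝 0) := tendsto_const_nhds.div_atTop tendsto_id
  have hminus := tendsto_stdCdf_atTop.comp (tendsto_id.atTop_add hinv.neg)
  have hplus := tendsto_stdCdf_atTop.comp (tendsto_id.atTop_add hinv)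
  have h := (tendsto_mixKernel_div_atTop u).add
    (((hminus.const_mul ((1 + 1 / u) * exp (-u))).add
      (hplus.const_mul ((1 - 1 / u) * exp u))).const_mul (√(2 * π) / (2 * u ^ 2)))
  convert h using 1
  · ext l; simp [mixAntideriv, sub_eq_add_neg]
  · simp

theorem integral_mixKernel_div_pow_four {u : ℝ} (hu : 0 < u) :
    ∫ l in Ioi 0, mixKernel u l / l ^ 4 = √(2 * π) * exp (-u) * (1 + 1 / u) / (2 * u ^ 2) := by
  rw [integral_Ioi_of_hasDerivAt_of_nonneg_of_tendsto_nhdsGT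
    (fun l hl => hasDerivAt_mixAntideriv hu.ne' (ne_of_gt hl))
    (fun l _ => div_nonneg (exp_pos _).le (by positivity))
    (tendsto_mixAntideriv_nhdsGT_zero hu) (tendsto_mixAntideriv_atTop u)]
  ring

theorem gumbelMixture_integrand_eq {b : ℝ} (hb : 0 ≤ b) (m s c : ℝ) {l : ℝ} (hl : 0 < l) :
    (1 / (2 * l * s * c ^ 2) * stdPdf (l + m / (2 * l))) * (2 * b * l ^ (-3 : ℤ) * exp (-b / l ^ 2))
      = b * exp (-(m / 2)) / (s * c ^ 2 * √(2 * π))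
          * (mixKernel (√(m ^ 2 / 4 + 2 * b)) l / l ^ 4) := by
  have hu2 : √(m ^ 2 / 4 + 2 * b) ^ 2 = m ^ 2 / 4 + 2 * b := sq_sqrt (by positivity)
  have hexp : mixKernel (m / 2) l * exp (-b / l ^ 2) = mixKernel (√(m ^ 2 / 4 + 2 * b)) l := by
    rw [mixKernel, mixKernel, ← exp_add, hu2]
    congr 1
    ring
  rw [show m / (2 * l) = m / 2 / l by ring, stdPdf_add_div _ hl.ne', ← hexp, zpow_neg,
    zpow_ofNat]
  field_simp

theorem mul_rpow_three_halves {s c : ℝ} (hs : 0 < s) (hc : 0 < c) :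
    (s * c) ^ ((3 : ℝ) / 2) = s * c ^ 2 * exp (log (s / c) / 2) := by
  rw [rpow_def_of_pos (mul_pos hs hc), log_mul hs.ne' hc.ne', log_div hs.ne' hc.ne']
  conv_rhs => rw [← exp_log hs, ← exp_log hc, ← exp_nat_mul, ← exp_add, ← exp_add]
  rw [log_exp, log_exp]
  congr 1
  push_cast
  ring

/-- **Spectral density of the Type-2 Gumbel mixture.** -/
theorem stmt15 (b : ℝ) (hb : 0 < b) (θ : ℝ) (hθ : θ ∈ Set.Ioo 0 (Real.pi / 2)) :
    ∫ l in Set.Ioi (0 : ℝ),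
        (1 / (2 * l * Real.sin θ * Real.cos θ ^ 2)
            * stdPdf (l + Real.log (Real.tan θ) / (2 * l)))
          * (2 * b * l ^ (-3 : ℤ) * Real.exp (-b / l ^ 2))
      = Real.exp (-Real.sqrt ((Real.log (Real.tan θ)) ^ 2 / 4 + 2 * b))
            / (4 * (Real.sin θ * Real.cos θ) ^ ((3 : ℝ) / 2))
          * (1 - (Real.log (Real.tan θ)) ^ 2
              / (4 * Real.sqrt ((Real.log (Real.tan θ)) ^ 2 / 4 + 2 * b) ^ 2))
          * (1 + 1 / Real.sqrt ((Real.log (Real.tan θ)) ^ 2 / 4 + 2 * b)) := by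
  obtain ⟨hθ0, hθ1⟩ := hθ
  have hs : 0 < sin θ := sin_pos_of_pos_of_lt_pi hθ0 (by linarith [pi_pos])
  have hc : 0 < cos θ := cos_pos_of_mem_Ioo ⟨by linarith, hθ1⟩
  rw [setIntegral_congr_fun measurableSet_Ioi fun l hl => gumbelMixture_integrand_eq hb.le _ _ _ hl,
    integral_const_mul, integral_mixKernel_div_pow_four (sqrt_pos.2 (by positivity)),
    mul_rpow_three_halves hs hc, ← tan_eq_sin_div_cos]
  set m := log (tan θ)
  set u := √(m ^ 2 / 4 + 2 * b) with hu
  have hu2 : m ^ 2 = 4 * u ^ 2 - 8 * b := by rw [hu, sq_sqrt (by positivity)]; ring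
  have hu0 : 0 < u := sqrt_pos.2 (by positivity)
  rw [hu2, exp_neg (m / 2)]
  field_simp
  ring
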